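/- For any complex numbers v_1,…,v_n, |∏_{k=1}^n (1+v_k)e^{−v_k} − 1| ≤ (√e − 1) · V₂ · e^{V₂/2}, where V₂ = ∑_{k=1}^n |v_k|². -/

import Mathlib

set_option maxHeartbeats 1000000

open Finset

private lemma abs_one_add_mul_exp_neg_le (z : ℂ) :
    ‖(1 + z) * Complex.exp (-z)‖ ≤ Real.exp (‖z‖ ^ 2 / 2) := by
  rw [norm_mul, Complex.norm_exp, Complex.neg_re]
  have h1 : ‖1 + z‖ ≤ Real.exp (z.re + ‖z‖ ^ 2 / 2) := by
    have hsq : ‖1 + z‖ ^ 2 ≤ Real.exp (z.re + ‖z‖ ^ 2 / 2) ^ 2 := by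
      rw [← Real.exp_nat_mul]
      have h2 : ‖1 + z‖ ^ 2 = 1 + (2 * z.re + ‖z‖ ^ 2) := by
        rw [Complex.sq_norm, Complex.sq_norm, Complex.normSq_apply, Complex.normSq_apply]
        simp [Complex.add_re, Complex.add_im]
        ring
      rw [h2]
      calc 1 + (2 * z.re + ‖z‖ ^ 2)
          ≤ Real.exp (2 * z.re + ‖z‖ ^ 2) := by
            have := Real.add_one_le_exp (2 * z.re + ‖z‖ ^ 2); linarith
        _ = Real.exp ((2:ℕ) * (z.re + ‖z‖ ^ 2 / 2)) := by norm_num; ring_nf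
    calc ‖1 + z‖ = Real.sqrt (‖1 + z‖ ^ 2) := by
          rw [Real.sqrt_sq (norm_nonneg _)]
      _ ≤ Real.sqrt (Real.exp (z.re + ‖z‖ ^ 2 / 2) ^ 2) := Real.sqrt_le_sqrt hsq
      _ = Real.exp (z.re + ‖z‖ ^ 2 / 2) := Real.sqrt_sq (Real.exp_pos _).le
  calc ‖1 + z‖ * Real.exp (-z.re)
      ≤ Real.exp (z.re + ‖z‖ ^ 2 / 2) * Real.exp (-z.re) :=
        mul_le_mul_of_nonneg_right h1 (Real.exp_pos _).le
    _ = Real.exp (‖z‖ ^ 2 / 2) := by rw [← Real.exp_add]; ring_nf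

private lemma sqrt_exp_one_sub_one_ge : (0.6487 : ℝ) ≤ Real.sqrt (Real.exp 1) - 1 := by
  have h : (1.6487 : ℝ) ≤ Real.sqrt (Real.exp 1) := by
    rw [show (1.6487:ℝ) = Real.sqrt (1.6487^2) by rw [Real.sqrt_sq (by norm_num)]]
    apply Real.sqrt_le_sqrt
    nlinarith [Real.exp_one_gt_d9]
  linarith

private lemma factor_bound (z : ℂ) :
    ‖(1 + z) * Complex.exp (-z) - 1‖
      ≤ (Real.sqrt (Real.exp 1) - 1) * ‖z‖ ^ 2
          * Real.exp (‖z‖ ^ 2 / 2) := by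
  set s := ‖z‖ with hsdef
  have hs0 : (0:ℝ) ≤ s := norm_nonneg z
  have hc := sqrt_exp_one_sub_one_ge
  have hc0 : (0:ℝ) ≤ Real.sqrt (Real.exp 1) - 1 := by linarith
  have hE : 1 + s^2/2 + (s^2/2)^2/2 ≤ Real.exp (s^2/2) :=
    Real.quadratic_le_exp_of_nonneg (by positivity)
  have hmid : (0.6487:ℝ) * (s^2 * (1 + s^2/2 + (s^2/2)^2/2))
      ≤ (Real.sqrt (Real.exp 1) - 1) * s ^ 2 * Real.exp (s ^ 2 / 2) := by
    have h1 : s^2 * (1 + s^2/2 + (s^2/2)^2/2) ≤ s^2 * Real.exp (s^2/2) :=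
      mul_le_mul_of_nonneg_left hE (sq_nonneg s)
    have h2 : (0:ℝ) ≤ s^2 * (1 + s^2/2 + (s^2/2)^2/2) := by positivity
    calc (0.6487:ℝ) * (s^2 * (1 + s^2/2 + (s^2/2)^2/2))
        ≤ (Real.sqrt (Real.exp 1) - 1) * (s^2 * Real.exp (s^2/2)) :=
          mul_le_mul hc h1 h2 hc0
      _ = (Real.sqrt (Real.exp 1) - 1) * s ^ 2 * Real.exp (s ^ 2 / 2) := by ring
  rcases le_or_gt s (3/2) with h | h
  · -- series case
    have hR : ‖Complex.exp (-z) - ∑ m ∈ Finset.range 8, (-z) ^ m / m.factorial‖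
        ≤ ‖-z‖ ^ 8 / (Nat.factorial 8) * 2 := by
      apply Complex.exp_bound'
      rw [norm_neg]
      norm_num
      linarith
    rw [norm_neg] at hR
    have hkey : (1 + z) * Complex.exp (-z) - 1
        = (1 + z) * (Complex.exp (-z) - ∑ m ∈ Finset.range 8, (-z) ^ m / m.factorial)
          + (-z^2/2 + z^3/3 - z^4/8 + z^5/30 - z^6/144 + z^7/840 - z^8/5040) := by
      simp [Finset.sum_range_succ, Nat.factorial]
      ring
    rw [hkey]
    have h1z : ‖1 + z‖ ≤ 1 + s := by
      calc ‖1 + z‖ ≤ ‖(1:ℂ)‖ + ‖z‖ := norm_add_le _ _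
        _ = 1 + s := by rw [norm_one]
    have hA : ‖(1 + z) * (Complex.exp (-z) - ∑ m ∈ Finset.range 8, (-z) ^ m / m.factorial)‖
        ≤ (1 + s) * (s ^ 8 / (Nat.factorial 8) * 2) := by
      rw [norm_mul]
      exact mul_le_mul h1z hR (norm_nonneg _) (by linarith)
    have hB : ‖-z^2/2 + z^3/3 - z^4/8 + z^5/30 - z^6/144 + z^7/840 - z^8/5040‖
        ≤ s^2/2 + s^3/3 + s^4/8 + s^5/30 + s^6/144 + s^7/840 + s^8/5040 := by
      have e2 : ‖-z^2/2‖ = s^2/2 := by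
        rw [show -z^2/2 = -(z^2)/2 by ring, norm_div, norm_neg, norm_pow]; norm_num; rfl
      have e3 : ‖z^3/3‖ = s^3/3 := by rw [norm_div, norm_pow]; norm_num; rfl
      have e4 : ‖z^4/8‖ = s^4/8 := by rw [norm_div, norm_pow]; norm_num; rfl
      have e5 : ‖z^5/30‖ = s^5/30 := by rw [norm_div, norm_pow]; norm_num; rfl
      have e6 : ‖z^6/144‖ = s^6/144 := by rw [norm_div, norm_pow]; norm_num; rfl
      have e7 : ‖z^7/840‖ = s^7/840 := by rw [norm_div, norm_pow]; norm_num; rfl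
      have e8 : ‖z^8/5040‖ = s^8/5040 := by rw [norm_div, norm_pow]; norm_num; rfl
      calc ‖-z^2/2 + z^3/3 - z^4/8 + z^5/30 - z^6/144 + z^7/840 - z^8/5040‖
          ≤ ‖-z^2/2 + z^3/3 - z^4/8 + z^5/30 - z^6/144 + z^7/840‖
              + ‖z^8/5040‖ := norm_sub_le _ _
        _ ≤ ‖-z^2/2 + z^3/3 - z^4/8 + z^5/30 - z^6/144‖
              + ‖z^7/840‖ + ‖z^8/5040‖ := by
            gcongr; exact norm_add_le _ _
        _ ≤ ‖-z^2/2 + z^3/3 - z^4/8 + z^5/30‖ + ‖z^6/144‖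
              + ‖z^7/840‖ + ‖z^8/5040‖ := by
            gcongr; exact norm_sub_le _ _
        _ ≤ ‖-z^2/2 + z^3/3 - z^4/8‖ + ‖z^5/30‖ + ‖z^6/144‖
              + ‖z^7/840‖ + ‖z^8/5040‖ := by
            gcongr; exact norm_add_le _ _
        _ ≤ ‖-z^2/2 + z^3/3‖ + ‖z^4/8‖ + ‖z^5/30‖
              + ‖z^6/144‖ + ‖z^7/840‖ + ‖z^8/5040‖ := by
            gcongr; exact norm_sub_le _ _
        _ ≤ ‖-z^2/2‖ + ‖z^3/3‖ + ‖z^4/8‖ + ‖z^5/30‖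
              + ‖z^6/144‖ + ‖z^7/840‖ + ‖z^8/5040‖ := by
            gcongr; exact norm_add_le _ _
        _ = s^2/2 + s^3/3 + s^4/8 + s^5/30 + s^6/144 + s^7/840 + s^8/5040 := by
            rw [e2, e3, e4, e5, e6, e7, e8]
    calc ‖(1 + z) * (Complex.exp (-z) - ∑ m ∈ Finset.range 8, (-z) ^ m / m.factorial)
            + (-z^2/2 + z^3/3 - z^4/8 + z^5/30 - z^6/144 + z^7/840 - z^8/5040)‖
          ≤ ‖(1 + z) * (Complex.exp (-z) - ∑ m ∈ Finset.range 8, (-z) ^ m / m.factorial)‖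
            + ‖-z^2/2 + z^3/3 - z^4/8 + z^5/30 - z^6/144 + z^7/840 - z^8/5040‖ :=
          norm_add_le _ _
      _ ≤ (1 + s) * (s ^ 8 / (Nat.factorial 8) * 2)
            + (s^2/2 + s^3/3 + s^4/8 + s^5/30 + s^6/144 + s^7/840 + s^8/5040) :=
          add_le_add hA hB
      _ ≤ (0.6487:ℝ) * (s^2 * (1 + s^2/2 + (s^2/2)^2/2)) := by
          have hf : ((Nat.factorial 8 : ℕ) : ℝ) = 40320 := by norm_num [Nat.factorial]
          rw [hf]
          nlinarith [sq_nonneg s, sq_nonneg (s-1), sq_nonneg (s*s), pow_nonneg hs0 3,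
            pow_nonneg hs0 5, pow_nonneg hs0 7, sq_nonneg (s*(s-1)), sq_nonneg (s*s*(s-1)),
            mul_nonneg (mul_nonneg hs0 hs0) hs0, sq_nonneg (s-0.7), sq_nonneg (s*(s-0.7)),
            sq_nonneg (s*s*(s-0.7)), sq_nonneg (s*s*s*(s-0.7))]
      _ ≤ _ := hmid
  · -- large s case
    have habs : ‖(1 + z) * Complex.exp (-z) - 1‖
        ≤ Real.exp (s ^ 2 / 2) + 1 := by
      calc ‖(1 + z) * Complex.exp (-z) - 1‖
          ≤ ‖(1 + z) * Complex.exp (-z)‖ + ‖(1:ℂ)‖ :=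
            norm_sub_le _ _
        _ ≤ Real.exp (s ^ 2 / 2) + 1 := by
            rw [norm_one]; exact add_le_add_left (abs_one_add_mul_exp_neg_le z) 1
    refine habs.trans ?_
    set E := Real.exp (s^2/2) with hEdef
    have hs2 : (9/4 : ℝ) ≤ s^2 := by nlinarith
    have h1 : (0.459 : ℝ) ≤ 0.6487 * s^2 - 1 := by nlinarith
    have h2 : (2.75 : ℝ) ≤ E := by nlinarith
    have : E + 1 ≤ (0.6487:ℝ) * (s^2 * E) := by
      nlinarith [mul_le_mul h1 h2 (by norm_num) (by linarith)]
    refine this.trans ?_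
    calc (0.6487:ℝ) * (s^2 * E) ≤ (Real.sqrt (Real.exp 1) - 1) * (s^2 * E) :=
          mul_le_mul_of_nonneg_right hc (by positivity)
      _ = (Real.sqrt (Real.exp 1) - 1) * s ^ 2 * E := by ring

private lemma prod_bounds (v : ℕ → ℂ) (n : ℕ) :
    ‖∏ k ∈ Finset.range n, ((1 + v k) * Complex.exp (-v k))‖
        ≤ Real.exp ((∑ k ∈ Finset.range n, ‖v k‖ ^ 2) / 2) ∧
    ‖(∏ k ∈ Finset.range n, ((1 + v k) * Complex.exp (-v k))) - 1‖
        ≤ (Real.sqrt (Real.exp 1) - 1) * (∑ k ∈ Finset.range n, ‖v k‖ ^ 2)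
            * Real.exp ((∑ k ∈ Finset.range n, ‖v k‖ ^ 2) / 2) := by
  have hc0 : (0:ℝ) ≤ Real.sqrt (Real.exp 1) - 1 := by
    have := sqrt_exp_one_sub_one_ge; linarith
  induction n with
  | zero => simp
  | succ n ih =>
    obtain ⟨ih1, ih2⟩ := ih
    rw [Finset.prod_range_succ, Finset.sum_range_succ]
    generalize hcdef : Real.sqrt (Real.exp 1) - 1 = c at ih2 hc0 ⊢
    generalize hSdef : (∑ k ∈ Finset.range n, ‖v k‖ ^ 2) = S at ih1 ih2 ⊢
    generalize hPdef : (∏ k ∈ Finset.range n, ((1 + v k) * Complex.exp (-v k))) = P at ih1 ih2 ⊢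
    have hfb := factor_bound (v n)
    rw [hcdef] at hfb
    have hS0 : (0:ℝ) ≤ S := by
      rw [← hSdef]; exact Finset.sum_nonneg fun k _ => sq_nonneg _
    have ht0 : (0:ℝ) ≤ ‖v n‖ ^ 2 := sq_nonneg _
    have hsplit : Real.exp (S / 2) * Real.exp (‖v n‖ ^ 2 / 2)
        = Real.exp ((S + ‖v n‖ ^ 2) / 2) := by
      rw [← Real.exp_add]; ring_nf
    have hEmono : Real.exp (S / 2) ≤ Real.exp ((S + ‖v n‖ ^ 2) / 2) :=
      Real.exp_le_exp.mpr (by linarith)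
    constructor
    · rw [norm_mul]
      calc ‖P‖ * ‖(1 + v n) * Complex.exp (-v n)‖
          ≤ Real.exp (S / 2) * Real.exp (‖v n‖ ^ 2 / 2) :=
            mul_le_mul ih1 (abs_one_add_mul_exp_neg_le (v n)) (norm_nonneg _)
              (Real.exp_pos _).le
        _ = Real.exp ((S + ‖v n‖ ^ 2) / 2) := hsplit
    · have hkey : P * ((1 + v n) * Complex.exp (-v n)) - 1
          = P * ((1 + v n) * Complex.exp (-v n) - 1) + (P - 1) := by ring
      rw [hkey]
      calc ‖P * ((1 + v n) * Complex.exp (-v n) - 1) + (P - 1)‖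
          ≤ ‖P * ((1 + v n) * Complex.exp (-v n) - 1)‖ + ‖P - 1‖ :=
            norm_add_le _ _
        _ = ‖P‖ * ‖(1 + v n) * Complex.exp (-v n) - 1‖
              + ‖P - 1‖ := by rw [norm_mul]
        _ ≤ Real.exp (S / 2) * (c * ‖v n‖ ^ 2 * Real.exp (‖v n‖ ^ 2 / 2))
              + c * S * Real.exp (S / 2) := by
            refine add_le_add ?_ ih2
            exact mul_le_mul ih1 hfb (norm_nonneg _) (Real.exp_pos _).le
        _ ≤ c * (S + ‖v n‖ ^ 2) * Real.exp ((S + ‖v n‖ ^ 2) / 2) := by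
            have e1 : Real.exp (S / 2)
                  * (c * ‖v n‖ ^ 2 * Real.exp (‖v n‖ ^ 2 / 2))
                = c * ‖v n‖ ^ 2 * Real.exp ((S + ‖v n‖ ^ 2) / 2) := by
              rw [← hsplit]; ring
            have e2 : c * S * Real.exp (S / 2)
                ≤ c * S * Real.exp ((S + ‖v n‖ ^ 2) / 2) :=
              mul_le_mul_of_nonneg_left hEmono (by positivity)
            nlinarith

theorem prod_one_add_mul_exp_neg_sub_one_bound (n : ℕ) (v : ℕ → ℂ) :
    ‖∏ k ∈ Finset.range n, (1 + v k) * Complex.exp (-v k) - 1‖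
      ≤ (Real.sqrt (Real.exp 1) - 1) * (∑ k ∈ Finset.range n, ‖v k‖ ^ 2)
          * Real.exp ((∑ k ∈ Finset.range n, ‖v k‖ ^ 2) / 2) := by
  exact (prod_bounds v n).2
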